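/- Let S_λ be a weighted shift on a directed tree T = (V,E) with weights λ = {λ_v}_{v∈V°}. Fix u ∈ V and n ∈ ℤ₊. Then: (i) e_u ∈ D(S_λ^n) if and only if ∑_{v ∈ Chi^m(u)} |λ_{u|v}|² < ∞ for all integers m with 1 ≤ m ≤ n; (ii) if e_u ∈ D(S_λ^n), then S_λ^n e_u = ∑_{v ∈ Chi^n(u)} λ_{u|v} e_v; (iii) if e_u ∈ D(S_λ^n), then ‖S_λ^n e_u‖² = ∑_{v ∈ Chi^n(u)} |λ_{u|v}|². -/

import Mathlib

open MeasureTheory ENNReal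
open scoped NNReal
noncomputable section

/-- `μ` is a representing measure of the sequence `t`. -/
def IsRepMeasure (μ : Measure ℝ≥0) (t : ℕ → ℝ) : Prop :=
  ∀ n : ℕ, Integrable (fun s : ℝ≥0 => (s : ℝ) ^ n) μ ∧ t n = ∫ s, (s : ℝ) ^ n ∂μ

/-- `t` is a Stieltjes moment sequence. -/
def IsStieltjesMoment (t : ℕ → ℝ) : Prop := ∃ μ : Measure ℝ≥0, IsRepMeasure μ t

/-- `t` is a determinate Stieltjes moment sequence. -/
def IsDetStieltjesMoment (t : ℕ → ℝ) : Prop := ∃! μ : Measure ℝ≥0, IsRepMeasure μ t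

section Operators

universe u
variable {H : Type u} [NormedAddCommGroup H] [InnerProductSpace ℂ H]

/-- The maximal domain of the composition `S ∘ T`. -/
def compDomain (S T : H →ₗ.[ℂ] H) : Submodule ℂ H where
  carrier := {x | ∃ hx : x ∈ T.domain, T ⟨x, hx⟩ ∈ S.domain}
  zero_mem' := ⟨T.domain.zero_mem, by
    have h0 : (⟨0, T.domain.zero_mem⟩ : T.domain) = 0 := rfl
    rw [h0, LinearPMap.map_zero]; exact S.domain.zero_mem⟩
  add_mem' := by
    rintro x y ⟨hx, hx'⟩ ⟨hy, hy'⟩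
    refine ⟨T.domain.add_mem hx hy, ?_⟩
    have : (⟨x + y, T.domain.add_mem hx hy⟩ : T.domain) = ⟨x, hx⟩ + ⟨y, hy⟩ := rfl
    rw [this, LinearPMap.map_add]
    exact S.domain.add_mem hx' hy'
  smul_mem' := by
    rintro c x ⟨hx, hx'⟩
    refine ⟨T.domain.smul_mem c hx, ?_⟩
    have : (⟨c • x, T.domain.smul_mem c hx⟩ : T.domain) = c • (⟨x, hx⟩ : T.domain) := rfl
    rw [this, LinearPMap.map_smul]
    exact S.domain.smul_mem c hx'

/-- Composition `S ∘ T` of partial operators, on the maximal domain. -/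
def pmapComp (S T : H →ₗ.[ℂ] H) : H →ₗ.[ℂ] H :=
  S.comp (T.domRestrict (compDomain S T)) (by
    rintro ⟨x, hx⟩
    have hxT : x ∈ T.domain := (Submodule.mem_inf.mp hx).2
    have hxD : x ∈ compDomain S T := (Submodule.mem_inf.mp hx).1
    have e : T.domRestrict (compDomain S T) ⟨x, hx⟩ = T ⟨x, hxT⟩ := by
      first
        | exact LinearPMap.domRestrict_apply rfl
        | rfl
    rw [e]
    exact hxD.choose_spec)

/-- Powers of a partial operator: `pmapPow S n = Sⁿ` with its natural domain. -/
def pmapPow (S : H →ₗ.[ℂ] H) : ℕ → (H →ₗ.[ℂ] H)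
  | 0 => LinearMap.id.toPMap ⊤
  | n + 1 => pmapComp (pmapPow S n) S

open Classical in
/-- Total (junk-valued) application of the power `Sⁿ`. -/
def powApp (S : H →ₗ.[ℂ] H) (n : ℕ) (x : H) : H :=
  if h : x ∈ (pmapPow S n).domain then (pmapPow S n) ⟨x, h⟩ else 0

/-- The set of `C^∞`-vectors of `S`. -/
def Dinf (S : H →ₗ.[ℂ] H) : Set H := {x | ∀ n : ℕ, x ∈ (pmapPow S n).domain}

/-- `F` is a core of `S`. -/
def IsCore (S : H →ₗ.[ℂ] H) (F : Submodule ℂ H) : Prop :=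
  F ≤ S.domain ∧ (S.graph : Set (H × H)) ⊆ closure ((S.domRestrict F).graph : Set (H × H))

end Operators
section Operators
universe u
variable {H : Type u} [NormedAddCommGroup H] [InnerProductSpace ℂ H]

/-- A normal (unbounded) operator: closed, densely defined, with `D(N*) = D(N)` and
`‖N* x‖ = ‖N x‖` on the common domain. -/
def IsNormalOp [CompleteSpace H] (N : H →ₗ.[ℂ] H) : Prop :=
  Dense (N.domain : Set H) ∧ N.IsClosed ∧ N.adjoint.domain = N.domain ∧
    ∀ (x : H) (hx : x ∈ N.domain) (hx' : x ∈ N.adjoint.domain),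
      ‖N.adjoint ⟨x, hx'⟩‖ = ‖N ⟨x, hx⟩‖

/-- A subnormal operator: densely defined with a normal extension in a possibly
larger Hilbert space. -/
def IsSubnormal {H : Type u} [NormedAddCommGroup H] [InnerProductSpace ℂ H]
    (S : H →ₗ.[ℂ] H) : Prop :=
  Dense (S.domain : Set H) ∧
  ∃ (K : Type u) (_ : NormedAddCommGroup K) (_ : InnerProductSpace ℂ K) (_ : CompleteSpace K)
    (J : H →ₗᵢ[ℂ] K) (N : K →ₗ.[ℂ] K), IsNormalOp N ∧
      ∀ x : S.domain, ∃ hx : J x ∈ N.domain, N ⟨J x, hx⟩ = J (S x)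

/-- A hyponormal operator. -/
def IsHyponormal [CompleteSpace H] (S : H →ₗ.[ℂ] H) : Prop :=
  Dense (S.domain : Set H) ∧
  ∀ (x : H) (hx : x ∈ S.domain), ∃ hx' : x ∈ S.adjoint.domain,
      ‖S.adjoint ⟨x, hx'⟩‖ ≤ ‖S ⟨x, hx⟩‖

end Operators

/-- A directed tree on the vertex set `V`: a connected directed graph without circuits
in which every non-root vertex has a unique parent. -/
structure DirectedTree (V : Type*) where
  edge : V → V → Prop
  connected : ∀ u v : V, Relation.ReflTransGen (fun a b => edge a b ∨ edge b a) u v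
  no_circuits : ∀ v : V, ¬ Relation.TransGen edge v v
  parent_unique : ∀ u v w : V, edge v u → edge w u → v = w

namespace DirectedTree

variable {V : Type*}

/-- The roots: vertices with no incoming edge. -/
def isRoot (T : DirectedTree V) (v : V) : Prop := ¬ ∃ u : V, T.edge u v

/-- `V°`: the non-root vertices, i.e. vertices having a parent. -/
def nonRoot (T : DirectedTree V) (v : V) : Prop := ∃ u : V, T.edge u v

open Classical in
/-- The parent function (with junk value at roots). -/
def par (T : DirectedTree V) (v : V) : V := if h : ∃ u : V, T.edge u v then h.choose else v

/-- The set of children of a vertex. -/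
def chi (T : DirectedTree V) (u : V) : Set V := {v | T.edge u v}

/-- Iterated children `Chi^n(u)`. -/
def chiN (T : DirectedTree V) : ℕ → V → Set V
  | 0, u => {u}
  | n + 1, u => ⋃ w ∈ T.chiN n u, T.chi w

/-- The descendants of `u`. -/
def des (T : DirectedTree V) (u : V) : Set V := ⋃ n : ℕ, T.chiN n u

/-- `T` is leafless: every vertex has a child. -/
def Leafless (T : DirectedTree V) : Prop := ∀ u : V, ∃ v : V, T.edge u v

/-- The product `λ_{u∣v} = ∏_{j=0}^{n-1} λ_{par^j(v)}` of the weights along the path of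
length `n` ending at `v` (for `v ∈ Chi^n(u)` this is the usual `λ_{u∣v}`). -/
def pathProd (T : DirectedTree V) (lam : V → ℂ) (n : ℕ) (v : V) : ℂ :=
  ∏ j ∈ Finset.range n, lam (T.par^[j] v)

open Classical in
/-- The formal weighted-shift transformation `Λ_T` on families of complex numbers. -/
def lamMap (T : DirectedTree V) (lam : V → ℂ) (f : V → ℂ) : V → ℂ :=
  fun v => if T.nonRoot v then lam v * f (T.par v) else 0

variable (T : DirectedTree V)

theorem lamMap_add (lam : V → ℂ) (f g : V → ℂ) :
    T.lamMap lam (f + g) = T.lamMap lam f + T.lamMap lam g := by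
  funext v; simp only [lamMap, Pi.add_apply]; split <;> ring

theorem lamMap_smul (lam : V → ℂ) (c : ℂ) (f : V → ℂ) :
    T.lamMap lam (c • f) = c • T.lamMap lam f := by
  funext v; simp only [lamMap, Pi.smul_apply, smul_eq_mul]; split <;> ring

theorem lamMap_zero (lam : V → ℂ) : T.lamMap lam (0 : V → ℂ) = 0 := by
  funext v; simp [lamMap]

/-- The domain of the weighted shift `S_λ`. -/
def shiftDomain (lam : V → ℂ) : Submodule ℂ (lp (fun _ : V => ℂ) 2) where
  carrier := {f | Memℓp (T.lamMap lam f) 2}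
  zero_mem' := by
    rw [Set.mem_setOf_eq, lp.coeFn_zero, lamMap_zero]
    exact zero_memℓp
  add_mem' := by
    intro f g hf hg
    rw [Set.mem_setOf_eq, lp.coeFn_add, lamMap_add]
    exact hf.add hg
  smul_mem' := by
    intro c f hf
    rw [Set.mem_setOf_eq, lp.coeFn_smul, lamMap_smul]
    exact hf.const_smul c

/-- The weighted shift `S_λ` on the directed tree `T`, as a partial operator in `ℓ²(V)`. -/
def shift (lam : V → ℂ) : lp (fun _ : V => ℂ) 2 →ₗ.[ℂ] lp (fun _ : V => ℂ) 2 where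
  domain := T.shiftDomain lam
  toFun :=
    { toFun := fun f => (⟨T.lamMap lam f, f.2⟩ : lp (fun _ : V => ℂ) 2)
      map_add' := by
        rintro f g
        apply lp.ext
        rw [lp.coeFn_add]
        show T.lamMap lam
            ((((f : lp (fun _ : V => ℂ) 2) : V → ℂ)) + (((g : lp (fun _ : V => ℂ) 2) : V → ℂ)))
          = T.lamMap lam ((f : lp (fun _ : V => ℂ) 2) : V → ℂ)
            + T.lamMap lam ((g : lp (fun _ : V => ℂ) 2) : V → ℂ)
        exact T.lamMap_add lam _ _
      map_smul' := by
        rintro c f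
        apply lp.ext
        rw [lp.coeFn_smul]
        show T.lamMap lam (c • (((f : lp (fun _ : V => ℂ) 2) : V → ℂ)))
          = c • T.lamMap lam ((f : lp (fun _ : V => ℂ) 2) : V → ℂ)
        exact T.lamMap_smul lam c _ }

end DirectedTree

open Classical in
/-- The basis vector `e_u` of `ℓ²(V)`. -/
def eVec {V : Type*} (u : V) : lp (fun _ : V => ℂ) 2 := lp.single 2 u 1

section MoreDefs
universe u
variable {H : Type u} [NormedAddCommGroup H] [InnerProductSpace ℂ H]

/-- The inner product, linear in the FIRST argument (the paper's convention). -/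
def innerPaper (x y : H) : ℂ := inner ℂ y x

/-- The moment sequence `n ↦ ‖Sⁿ f‖²` generated by the vector `f`. -/
def momentSeq (S : H →ₗ.[ℂ] H) (f : H) : ℕ → ℝ := fun n => ‖powApp S n f‖ ^ 2

/-- `f` is a quasi-analytic vector of `S` : `f ∈ D^∞(S)` and
`∑ₙ ‖Sⁿ f‖^{-1/n} = ∞` (with `1/0 = ∞`). -/
def IsQuasiAnalyticVec (S : H →ₗ.[ℂ] H) (f : H) : Prop :=
  (∀ n : ℕ, f ∈ (pmapPow S n).domain) ∧
  ∑' n : ℕ, ((‖powApp S (n + 1) f‖₊ ^ ((1 : ℝ) / (n + 1)) : ℝ≥0) : ℝ≥0∞)⁻¹ = ∞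

end MoreDefs

/-- The consistency condition `μ_u(σ) = ∑_{v ∈ Chi(u)} |λ_v|² ∫_σ (1/s) dμ_v(s) + ε_u δ₀(σ)`
at the vertex `u` (with the convention `1/0 = ∞`). -/
def consistentAt {V : Type*} (T : DirectedTree V) (lam : V → ℂ) (μ : V → MeasureTheory.Measure ℝ≥0)
    (ε : V → ℝ≥0) (u : V) : Prop :=
  ∀ σ : Set ℝ≥0, MeasurableSet σ →
    μ u σ = (∑' v : {v : V // T.edge u v},
        (‖lam (v : V)‖₊ : ℝ≥0∞) ^ 2 * ∫⁻ s in σ, ((s : ℝ≥0∞))⁻¹ ∂(μ (v : V)))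
      + (ε u : ℝ≥0∞) * MeasureTheory.Measure.dirac (0 : ℝ≥0) σ

/-- The sequence `{ϑ, t₀, t₁, t₂, …}` obtained by prepending `ϑ` to `t`. -/
def shiftedSeq (ϑ : ℝ) (t : ℕ → ℝ) : ℕ → ℝ := fun n => match n with
  | 0 => ϑ
  | n + 1 => t n

/-- A positive definite sequence of real numbers. -/
def IsPosDefSeq (t : ℕ → ℝ) : Prop :=
  ∀ (n : ℕ) (α : ℕ → ℂ),
    0 ≤ (∑ k ∈ Finset.range (n + 1), ∑ l ∈ Finset.range (n + 1),
        (t (k + l) : ℂ) * α k * (starRingEnd ℂ) (α l)).re ∧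
    (∑ k ∈ Finset.range (n + 1), ∑ l ∈ Finset.range (n + 1),
        (t (k + l) : ℂ) * α k * (starRingEnd ℂ) (α l)).im = 0

/-! Although powers are built as `Sⁿ⁺¹ = Sⁿ S`, one also has `D(Sⁿ⁺¹) = {f ∈ D(Sⁿ) : Sⁿ f ∈ D(S)}`
and `Sⁿ⁺¹ f = S Sⁿ f` there. By induction on `n` everything then reduces to one computation:
`Λ_T` sends `λ_{u|·}` on `Chi^m(u)`, extended by zero, to `λ_{u|·}` on `Chi^{m+1}(u)`, because the
children of `Chi^m(u)` are exactly the vertices whose parent lies in `Chi^m(u)`. Since `e_u` is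
this function for `m = 0`, the domain conditions and the norm are read off as `ℓ²`-sums. -/

section PartialPowers

variable {H : Type*} [NormedAddCommGroup H] [InnerProductSpace ℂ H]

theorem mem_domain_pmapComp_iff {A B : H →ₗ.[ℂ] H} {x : H} :
    x ∈ (pmapComp A B).domain ↔ ∃ hx : x ∈ B.domain, B ⟨x, hx⟩ ∈ A.domain :=
  ⟨fun h => (Submodule.mem_inf.mp h).1, fun h => Submodule.mem_inf.mpr ⟨h, h.1⟩⟩

theorem pmapComp_apply {A B : H →ₗ.[ℂ] H} {x : H} (h : x ∈ (pmapComp A B).domain)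
    (hx : x ∈ B.domain) (hBx : B ⟨x, hx⟩ ∈ A.domain) :
    pmapComp A B ⟨x, h⟩ = A ⟨B ⟨x, hx⟩, hBx⟩ := by
  unfold pmapComp LinearPMap.comp
  rw [LinearMap.compPMap_apply]
  exact congrArg A (Subtype.ext (LinearPMap.domRestrict_apply rfl))

variable (S : H →ₗ.[ℂ] H)

theorem powApp_of_mem {n : ℕ} {x : H} (h : x ∈ (pmapPow S n).domain) :
    powApp S n x = pmapPow S n ⟨x, h⟩ :=
  dif_pos h

theorem powApp_zero (x : H) : powApp S 0 x = x :=
  powApp_of_mem S (x := x) Submodule.mem_top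

theorem mem_domain_pmapPow_succ_iff {n : ℕ} {x : H} :
    x ∈ (pmapPow S (n + 1)).domain ↔ ∃ hx : x ∈ S.domain, S ⟨x, hx⟩ ∈ (pmapPow S n).domain :=
  mem_domain_pmapComp_iff

theorem powApp_succ {n : ℕ} {x : H} (hx : x ∈ S.domain) (hSx : S ⟨x, hx⟩ ∈ (pmapPow S n).domain) :
    powApp S (n + 1) x = powApp S n (S ⟨x, hx⟩) := by
  have h := (mem_domain_pmapPow_succ_iff S).mpr ⟨hx, hSx⟩
  rw [powApp_of_mem S h, powApp_of_mem S hSx]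
  exact pmapComp_apply h hx hSx

theorem mem_domain_pmapPow_succ_iff' {n : ℕ} {x : H} :
    x ∈ (pmapPow S (n + 1)).domain ↔
      x ∈ (pmapPow S n).domain ∧ powApp S n x ∈ S.domain := by
  induction n generalizing x with
  | zero =>
    rw [mem_domain_pmapPow_succ_iff, powApp_zero]
    exact ⟨fun ⟨hx, _⟩ => ⟨Submodule.mem_top, hx⟩, fun ⟨_, hx⟩ => ⟨hx, Submodule.mem_top⟩⟩
  | succ n ih =>
    rw [mem_domain_pmapPow_succ_iff, mem_domain_pmapPow_succ_iff]
    constructor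
    · rintro ⟨hx, hSx⟩
      obtain ⟨hSx, hpow⟩ := ih.mp hSx
      exact ⟨⟨hx, hSx⟩, powApp_succ S hx hSx ▸ hpow⟩
    · rintro ⟨⟨hx, hSx⟩, hpow⟩
      exact ⟨hx, ih.mpr ⟨hSx, powApp_succ S hx hSx ▸ hpow⟩⟩

theorem powApp_succ' {n : ℕ} {x : H} (h : x ∈ (pmapPow S n).domain)
    (hpow : powApp S n x ∈ S.domain) :
    powApp S (n + 1) x = S ⟨powApp S n x, hpow⟩ := by
  induction n generalizing x with
  | zero =>
    rw [powApp_zero] at hpow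
    rw [powApp_succ S hpow Submodule.mem_top, powApp_zero]
    exact congrArg S (Subtype.ext (powApp_zero S x).symm)
  | succ n ih =>
    obtain ⟨hx, hSx⟩ := (mem_domain_pmapPow_succ_iff S).mp h
    have hshift : powApp S (n + 1) x = powApp S n (S ⟨x, hx⟩) := powApp_succ S hx hSx
    have hSx' : S ⟨x, hx⟩ ∈ (pmapPow S (n + 1)).domain :=
      (mem_domain_pmapPow_succ_iff' S).mpr ⟨hSx, hshift ▸ hpow⟩
    rw [powApp_succ S hx hSx', ih hSx (hshift ▸ hpow)]
    exact congrArg S (Subtype.ext hshift.symm)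

end PartialPowers

theorem norm_rpow_toReal_two {F : Type*} [SeminormedAddCommGroup F] (x : F) :
    ‖x‖ ^ (2 : ℝ≥0∞).toReal = ((‖x‖₊ ^ 2 : ℝ≥0) : ℝ) := by
  simp

section LpTwo

variable {ι : Type*} {E : ι → Type*} [∀ i, NormedAddCommGroup (E i)]

theorem memℓp_two_iff_tsum_nnnorm_sq_ne_top {f : ∀ i, E i} :
    Memℓp f 2 ↔ ∑' i, (‖f i‖₊ : ℝ≥0∞) ^ 2 ≠ ⊤ := by
  simp_rw [memℓp_gen_iff (by norm_num : 0 < (2 : ℝ≥0∞).toReal), norm_rpow_toReal_two,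
    ← ENNReal.tsum_coe_ne_top_iff_summable_coe, ENNReal.coe_pow]

theorem lp.nnnorm_sq_eq_tsum (f : lp E 2) :
    (‖f‖₊ : ℝ≥0∞) ^ 2 = ∑' i, (‖f i‖₊ : ℝ≥0∞) ^ 2 := by
  have h : HasSum (fun i => ‖f i‖₊ ^ 2) (‖f‖₊ ^ 2) := by
    rw [← NNReal.hasSum_coe]
    simpa only [norm_rpow_toReal_two] using lp.hasSum_norm (p := 2) (by norm_num) f
  simp_rw [← ENNReal.coe_pow, ← h.tsum_eq, ENNReal.coe_tsum h.summable]

end LpTwo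

theorem tsum_nnnorm_sq_indicator {ι F : Type*} [SeminormedAddCommGroup F] (s : Set ι)
    (g : ι → F) :
    ∑' i, (‖s.indicator g i‖₊ : ℝ≥0∞) ^ 2 = ∑' i : s, (‖g i‖₊ : ℝ≥0∞) ^ 2 := by
  rw [tsum_subtype s (fun i => (‖g i‖₊ : ℝ≥0∞) ^ 2)]
  congr 1 with i
  by_cases hi : i ∈ s <;> simp [hi]

namespace DirectedTree

variable {V : Type*} (T : DirectedTree V)

theorem edge_par {v : V} (h : T.nonRoot v) : T.edge (T.par v) v := by
  rw [par, dif_pos (show ∃ w, T.edge w v from h)]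
  exact h.choose_spec

theorem par_eq_of_edge {w v : V} (h : T.edge w v) : T.par v = w :=
  T.parent_unique v _ w (T.edge_par ⟨w, h⟩) h

theorem mem_chiN_succ_iff {m : ℕ} {u v : V} :
    v ∈ T.chiN (m + 1) u ↔ T.nonRoot v ∧ T.par v ∈ T.chiN m u := by
  simp only [chiN, chi, Set.mem_iUnion, exists_prop]
  constructor
  · rintro ⟨w, hw, hwv⟩
    exact ⟨⟨w, hwv⟩, T.par_eq_of_edge hwv ▸ hw⟩
  · rintro ⟨hv, hpar⟩
    exact ⟨T.par v, hpar, T.edge_par hv⟩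

theorem pathProd_succ (lam : V → ℂ) (n : ℕ) (v : V) :
    T.pathProd lam (n + 1) v = lam v * T.pathProd lam n (T.par v) := by
  simp only [pathProd, Finset.prod_range_succ', Function.iterate_succ_apply,
    Function.iterate_zero_apply, mul_comm]

theorem lamMap_indicator_chiN (lam : V → ℂ) (u : V) (m : ℕ) :
    T.lamMap lam ((T.chiN m u).indicator (T.pathProd lam m)) =
      (T.chiN (m + 1) u).indicator (T.pathProd lam (m + 1)) := by
  funext v
  by_cases hv : T.nonRoot v
  · by_cases hpar : T.par v ∈ T.chiN m u
    · rw [lamMap, if_pos hv, Set.indicator_of_mem hpar,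
        Set.indicator_of_mem (T.mem_chiN_succ_iff.mpr ⟨hv, hpar⟩), pathProd_succ]
    · rw [lamMap, if_pos hv, Set.indicator_of_notMem hpar, mul_zero,
        Set.indicator_of_notMem fun h => hpar (T.mem_chiN_succ_iff.mp h).2]
  · rw [lamMap, if_neg hv, Set.indicator_of_notMem fun h => hv (T.mem_chiN_succ_iff.mp h).1]

theorem eVec_eq_indicator_chiN_zero (lam : V → ℂ) (u : V) :
    ⇑(eVec u) = (T.chiN 0 u).indicator (T.pathProd lam 0) := by
  classical
  funext w
  by_cases h : w = u
  · subst h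
    simp [eVec, chiN, pathProd]
  · simp [eVec, chiN, h]

theorem powApp_shift_eVec {lam : V → ℂ} {u : V} {n : ℕ}
    (h : eVec u ∈ (pmapPow (T.shift lam) n).domain) :
    ⇑(powApp (T.shift lam) n (eVec u)) = (T.chiN n u).indicator (T.pathProd lam n) := by
  induction n with
  | zero => rw [powApp_zero, T.eVec_eq_indicator_chiN_zero lam]
  | succ n ih =>
    obtain ⟨hn, hpow⟩ := (mem_domain_pmapPow_succ_iff' _).mp h
    rw [powApp_succ' _ hn hpow]
    exact (congrArg (T.lamMap lam) (ih hn)).trans (T.lamMap_indicator_chiN lam u n)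

theorem powApp_shift_eVec_mem_domain_iff {lam : V → ℂ} {u : V} {n : ℕ}
    (h : eVec u ∈ (pmapPow (T.shift lam) n).domain) :
    powApp (T.shift lam) n (eVec u) ∈ (T.shift lam).domain ↔
      Memℓp ((T.chiN (n + 1) u).indicator (T.pathProd lam (n + 1))) 2 := by
  rw [← T.lamMap_indicator_chiN, ← T.powApp_shift_eVec h]
  rfl

theorem eVec_mem_domain_pmapPow_shift_iff {lam : V → ℂ} {u : V} {n : ℕ} :
    eVec u ∈ (pmapPow (T.shift lam) n).domain ↔
      ∀ m, 1 ≤ m → m ≤ n → Memℓp ((T.chiN m u).indicator (T.pathProd lam m)) 2 := by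
  induction n with
  | zero => exact ⟨fun _ m h1 h2 => by omega, fun _ => Submodule.mem_top⟩
  | succ n ih =>
    rw [mem_domain_pmapPow_succ_iff', ih]
    constructor
    · rintro ⟨hle, hpow⟩ m h1 h2
      rcases Nat.le_succ_iff.mp h2 with hm | rfl
      · exact hle m h1 hm
      · exact (T.powApp_shift_eVec_mem_domain_iff (ih.mpr hle)).mp hpow
    · intro hall
      have hle : ∀ m, 1 ≤ m → m ≤ n → _ := fun m h1 h2 => hall m h1 (Nat.le_succ_of_le h2)
      exact ⟨hle, (T.powApp_shift_eVec_mem_domain_iff (ih.mpr hle)).mpr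
        (hall (n + 1) n.succ_pos le_rfl)⟩

end DirectedTree

/-- description of the powers of a weighted shift on the basis vectors. -/
theorem stmt5 {V : Type*} (T : DirectedTree V) (lam : V → ℂ) (u : V) (n : ℕ) :
    (eVec u ∈ (pmapPow (T.shift lam) n).domain ↔
      ∀ m : ℕ, 1 ≤ m → m ≤ n →
        (∑' v : (T.chiN m u), ((‖T.pathProd lam m (v : V)‖₊ : ℝ≥0∞)) ^ 2) ≠ ⊤)
    ∧ (eVec u ∈ (pmapPow (T.shift lam) n).domain →
        ∀ w : V, (powApp (T.shift lam) n (eVec u)) w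
          = (T.chiN n u).indicator (fun v => T.pathProd lam n v) w)
    ∧ (eVec u ∈ (pmapPow (T.shift lam) n).domain →
        ((‖powApp (T.shift lam) n (eVec u)‖₊ : ℝ≥0∞)) ^ 2
          = ∑' v : (T.chiN n u), ((‖T.pathProd lam n (v : V)‖₊ : ℝ≥0∞)) ^ 2) := by
  refine ⟨?_, fun h w => congrFun (T.powApp_shift_eVec h) w, fun h => ?_⟩
  · simp_rw [T.eVec_mem_domain_pmapPow_shift_iff, memℓp_two_iff_tsum_nnnorm_sq_ne_top,
      tsum_nnnorm_sq_indicator]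
  · rw [lp.nnnorm_sq_eq_tsum, T.powApp_shift_eVec h, tsum_nnnorm_sq_indicator]

end
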